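/- The quotient of 𝔤 by the Lie ideal generated by x'_n is isomorphic to the Borel subalgebra 𝔟_B of the simple complex Lie algebra of type B_n, and the quotient of 𝔤 by the Lie ideal generated by x_n is isomorphic to the Borel subalgebra 𝔟_C of type C_n. -/

import Mathlib

/-! We work with N = n + 2 vertices (so the paper's `n` is `n + 2`, covering all n ≥ 2).
Generators: `Sum.inl i` is x_i, `Sum.inr (Sum.inl i)` is h_i, `Sum.inr (Sum.inr ())` is x'_n,
all 0-indexed (the paper's index i corresponds to i - 1). -/

/-- The free complex Lie algebra on the generators x_1,…,x_N, h_1,…,h_N, x'_N. -/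
abbrev FL (n : ℕ) : Type :=
  FreeLieAlgebra ℂ (Fin (n + 2) ⊕ (Fin (n + 2) ⊕ Unit))

/-- The generator x_i. -/
noncomputable def Xg {n : ℕ} (i : Fin (n + 2)) : FL n :=
  FreeLieAlgebra.of ℂ (Sum.inl i)

/-- The generator h_i. -/
noncomputable def Hg {n : ℕ} (i : Fin (n + 2)) : FL n :=
  FreeLieAlgebra.of ℂ (Sum.inr (Sum.inl i))

/-- The generator x'_n. -/
noncomputable def Xg' (n : ℕ) : FL n :=
  FreeLieAlgebra.of ℂ (Sum.inr (Sum.inr ()))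

/-- The coefficients of the type-B relations (B2): [h_i,x_j] = aB i j • x_j. -/
def aB (n : ℕ) (i j : Fin (n + 2)) : ℂ :=
  if i = j then 2
  else if i.val = n + 1 ∧ j.val = n then -2
  else if i.val + 1 = j.val ∨ j.val + 1 = i.val then -1
  else 0

/-- The coefficients of the type-C relations (C2): [h'_i,x'_j] = aC i j • x'_j. -/
def aC (n : ℕ) (i j : Fin (n + 2)) : ℂ :=
  if i = j then 2
  else if i.val = n ∧ j.val = n + 1 then -2
  else if (i.val + 1 = j.val ∨ j.val + 1 = i.val) ∧ j.val ≠ n + 1 then -1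
  else 0

/-- The generator x'_i of the type-C Borel: x'_i = x_i for i < N, x'_N = x'_n. -/
noncomputable def xC {n : ℕ} (i : Fin (n + 2)) : FL n :=
  if i.val = n + 1 then Xg' n else Xg i

/-- The generator h'_i of the type-C Borel: h'_i = h_i for i < N, h'_N = (1/2)h_N. -/
noncomputable def hC {n : ℕ} (i : Fin (n + 2)) : FL n :=
  if i.val = n + 1 then (2 : ℂ)⁻¹ • Hg i else Hg i

/-- The Serre relations (B3) among the x_i (for i ≠ j). -/
noncomputable def serreB {n : ℕ} (i j : Fin (n + 2)) : FL n :=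
  if i.val = n + 1 ∧ j.val = n then ⁅Xg i, ⁅Xg i, ⁅Xg i, Xg j⁆⁆⁆
  else if i.val + 1 = j.val ∨ j.val + 1 = i.val then ⁅Xg i, ⁅Xg i, Xg j⁆⁆
  else ⁅Xg i, Xg j⁆

/-- The Serre relations (C3) among the x'_i (for i ≠ j). -/
noncomputable def serreC {n : ℕ} (i j : Fin (n + 2)) : FL n :=
  if i.val = n ∧ j.val = n + 1 then ⁅xC i, ⁅xC i, ⁅xC i, xC j⁆⁆⁆
  else if (i.val + 1 = j.val ∨ j.val + 1 = i.val) ∧ j.val ≠ n + 1 then ⁅xC i, ⁅xC i, xC j⁆⁆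
  else ⁅xC i, xC j⁆

/-- The set of relations (BC1), (BC2), (BC3) of the Lie algebra 𝔤 of type BC⁺. -/
noncomputable def RelBC (n : ℕ) : Set (FL n) :=
  (Set.range fun p : Fin (n + 2) × Fin (n + 2) => ⁅Hg p.1, Hg p.2⁆) ∪
  (Set.range fun p : Fin (n + 2) × Fin (n + 2) =>
    ⁅Hg p.1, Xg p.2⁆ - aB n p.1 p.2 • Xg p.2) ∪
  (Set.range fun p : {q : Fin (n + 2) × Fin (n + 2) // q.1 ≠ q.2} =>
    serreB p.1.1 p.1.2) ∪
  (Set.range fun p : Fin (n + 2) × Fin (n + 2) => ⁅hC p.1, hC p.2⁆) ∪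
  (Set.range fun p : Fin (n + 2) × Fin (n + 2) =>
    ⁅hC p.1, xC p.2⁆ - aC n p.1 p.2 • xC p.2) ∪
  (Set.range fun p : {q : Fin (n + 2) × Fin (n + 2) // q.1 ≠ q.2} =>
    serreC p.1.1 p.1.2) ∪
  {⁅Xg (⟨n + 1, by omega⟩ : Fin (n + 2)), Xg' n⁆,
   ⁅⁅Xg (⟨n, by omega⟩ : Fin (n + 2)), Xg (⟨n + 1, by omega⟩ : Fin (n + 2))⁆, Xg' n⁆}

/-- The Lie ideal of the free Lie algebra generated by the relations. -/
noncomputable def IdBC (n : ℕ) : LieIdeal ℂ (FL n) :=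
  LieSubmodule.lieSpan ℂ (FL n) (RelBC n)

/-- The Lie algebra 𝔤 of type BC⁺, presented by generators and relations. -/
abbrev gBC (n : ℕ) : Type := FL n ⧸ IdBC n

/-- The image of x_i in 𝔤. -/
noncomputable def xg {n : ℕ} (i : Fin (n + 2)) : gBC n :=
  LieSubmodule.Quotient.mk (N := IdBC n) (Xg i)

/-- The image of h_i in 𝔤. -/
noncomputable def hg {n : ℕ} (i : Fin (n + 2)) : gBC n :=
  LieSubmodule.Quotient.mk (N := IdBC n) (Hg i)

/-- The image of x'_n in 𝔤. -/
noncomputable def xg' (n : ℕ) : gBC n :=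
  LieSubmodule.Quotient.mk (N := IdBC n) (Xg' n)

/-- The free complex Lie algebra on generators x_1,…,x_N, h_1,…,h_N. -/
abbrev FB (n : ℕ) : Type := FreeLieAlgebra ℂ (Fin (n + 2) ⊕ Fin (n + 2))

/-- The generator x_i of the free Lie algebra for the Borel presentations. -/
noncomputable def XB {n : ℕ} (i : Fin (n + 2)) : FB n :=
  FreeLieAlgebra.of ℂ (Sum.inl i)

/-- The generator h_i of the free Lie algebra for the Borel presentations. -/
noncomputable def HB {n : ℕ} (i : Fin (n + 2)) : FB n :=
  FreeLieAlgebra.of ℂ (Sum.inr i)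

/-- The Serre relations (B3) in the free Lie algebra on x_i, h_i. -/
noncomputable def serreBB {n : ℕ} (i j : Fin (n + 2)) : FB n :=
  if i.val = n + 1 ∧ j.val = n then ⁅XB i, ⁅XB i, ⁅XB i, XB j⁆⁆⁆
  else if i.val + 1 = j.val ∨ j.val + 1 = i.val then ⁅XB i, ⁅XB i, XB j⁆⁆
  else ⁅XB i, XB j⁆

/-- The Serre relations (C3) in the free Lie algebra on x_i, h_i. -/
noncomputable def serreCC {n : ℕ} (i j : Fin (n + 2)) : FB n :=
  if i.val = n ∧ j.val = n + 1 then ⁅XB i, ⁅XB i, ⁅XB i, XB j⁆⁆⁆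
  else if (i.val + 1 = j.val ∨ j.val + 1 = i.val) ∧ j.val ≠ n + 1 then ⁅XB i, ⁅XB i, XB j⁆⁆
  else ⁅XB i, XB j⁆

/-- The relations (B1)-(B3) of the Borel subalgebra of type B_N. -/
noncomputable def RelB (n : ℕ) : Set (FB n) :=
  (Set.range fun p : Fin (n + 2) × Fin (n + 2) => ⁅HB p.1, HB p.2⁆) ∪
  (Set.range fun p : Fin (n + 2) × Fin (n + 2) =>
    ⁅HB p.1, XB p.2⁆ - aB n p.1 p.2 • XB p.2) ∪
  (Set.range fun p : {q : Fin (n + 2) × Fin (n + 2) // q.1 ≠ q.2} =>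
    serreBB p.1.1 p.1.2)

/-- The relations (C1)-(C3) of the Borel subalgebra of type C_N. -/
noncomputable def RelC (n : ℕ) : Set (FB n) :=
  (Set.range fun p : Fin (n + 2) × Fin (n + 2) => ⁅HB p.1, HB p.2⁆) ∪
  (Set.range fun p : Fin (n + 2) × Fin (n + 2) =>
    ⁅HB p.1, XB p.2⁆ - aC n p.1 p.2 • XB p.2) ∪
  (Set.range fun p : {q : Fin (n + 2) × Fin (n + 2) // q.1 ≠ q.2} =>
    serreCC p.1.1 p.1.2)

/-- The Borel subalgebra of type B_N, presented by generators and relations. -/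
abbrev borelB (n : ℕ) : Type :=
  FB n ⧸ LieSubmodule.lieSpan ℂ (FB n) (RelB n)

/-- The Borel subalgebra of type C_N, presented by generators and relations. -/
abbrev borelC (n : ℕ) : Type :=
  FB n ⧸ LieSubmodule.lieSpan ℂ (FB n) (RelC n)


/-! Both quotients are identified with the Borel algebras by matching presentations. Once x'_n is
killed, the relations of type C become scalar multiples of relations of type B (because
h'_n = ½ h_n) or vanish, so x_i ↦ x_i, h_i ↦ h_i, x'_n ↦ 0 defines an inverse of the obvious map
𝔟_B → 𝔤 / ⟨x'_n⟩. Symmetrically, once x_n is killed, x_i ↦ x_i (i < n), x_n ↦ 0, x'_n ↦ x_n,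
h_i ↦ h_i (i < n), h_n ↦ 2 h_n is inverse to the map 𝔟_C → 𝔤 / ⟨x_n⟩ sending x_i, h_i to
x'_i, h'_i. -/

namespace LieIdeal

variable {R L M : Type*} [CommRing R] [LieRing L] [LieAlgebra R L] [LieRing M] [LieAlgebra R M]

noncomputable def mkQ (I : LieIdeal R L) : L →ₗ⁅R⁆ L ⧸ I where
  toLinearMap := (I : Submodule R L).mkQ
  map_lie' := rfl

@[simp]
theorem mkQ_apply (I : LieIdeal R L) (x : L) : I.mkQ x = LieSubmodule.Quotient.mk x := rfl

noncomputable def liftQ (I : LieIdeal R L) (f : L →ₗ⁅R⁆ M) (h : I ≤ f.ker) : L ⧸ I →ₗ⁅R⁆ M where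
  toLinearMap := (I : Submodule R L).liftQ f fun x hx => f.mem_ker.mp (h hx)
  map_lie' := by
    rintro ⟨x⟩ ⟨y⟩
    exact f.map_lie x y

@[simp]
theorem liftQ_mk (I : LieIdeal R L) (f : L →ₗ⁅R⁆ M) (h : I ≤ f.ker) (x : L) :
    I.liftQ f h (LieSubmodule.Quotient.mk x) = f x := rfl

theorem quotient_hom_ext {I : LieIdeal R L} {F G : L ⧸ I →ₗ⁅R⁆ M}
    (h : F.comp I.mkQ = G.comp I.mkQ) : F = G := by
  ext z
  obtain ⟨x, rfl⟩ := LieSubmodule.Quotient.surjective_mk' I z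
  exact LieHom.congr_fun h x

theorem lieSpan_le_ker_iff {S : Set L} {f : L →ₗ⁅R⁆ M} :
    LieSubmodule.lieSpan R L S ≤ f.ker ↔ ∀ s ∈ S, f s = 0 := by
  simp only [LieSubmodule.lieSpan_le, Set.subset_def, SetLike.mem_coe, LieHom.mem_ker]

theorem mk_eq_zero_of_mem {S : Set L} {x : L} (hx : x ∈ S) :
    (LieSubmodule.Quotient.mk x : L ⧸ LieSubmodule.lieSpan R L S) = 0 :=
  LieSubmodule.Quotient.mk_eq_zero'.mpr (LieSubmodule.subset_lieSpan hx)

end LieIdeal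

noncomputable def LieEquiv.ofLieHoms {R L M : Type*} [CommRing R] [LieRing L] [LieAlgebra R L]
    [LieRing M] [LieAlgebra R M] (f : L →ₗ⁅R⁆ M) (g : M →ₗ⁅R⁆ L)
    (h₁ : g.comp f = LieHom.id) (h₂ : f.comp g = LieHom.id) : L ≃ₗ⁅R⁆ M :=
  { f with
    invFun := g
    left_inv := LieHom.congr_fun h₁
    right_inv := LieHom.congr_fun h₂ }

variable {n : ℕ}

theorem of_inl_eq_Xg (i : Fin (n + 2)) : FreeLieAlgebra.of ℂ (Sum.inl i) = Xg i := rfl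

theorem of_inr_inl_eq_Hg (i : Fin (n + 2)) : FreeLieAlgebra.of ℂ (Sum.inr (Sum.inl i)) = Hg i :=
  rfl

theorem of_inr_inr_eq_Xg' : FreeLieAlgebra.of ℂ (Sum.inr (Sum.inr ())) = Xg' n := rfl

theorem of_inl_eq_XB (i : Fin (n + 2)) : FreeLieAlgebra.of ℂ (Sum.inl i) = XB i := rfl

theorem of_inr_eq_HB (i : Fin (n + 2)) : FreeLieAlgebra.of ℂ (Sum.inr i) = HB i := rfl

theorem mem_RelBC_lie_Hg_Hg (i j : Fin (n + 2)) : ⁅Hg i, Hg j⁆ ∈ RelBC n :=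
  Or.inl (Or.inl (Or.inl (Or.inl (Or.inl (Or.inl ⟨(i, j), rfl⟩)))))

theorem mem_RelBC_lie_Hg_Xg (i j : Fin (n + 2)) : ⁅Hg i, Xg j⁆ - aB n i j • Xg j ∈ RelBC n :=
  Or.inl (Or.inl (Or.inl (Or.inl (Or.inl (Or.inr ⟨(i, j), rfl⟩)))))

theorem mem_RelBC_serreB {i j : Fin (n + 2)} (h : i ≠ j) : serreB i j ∈ RelBC n :=
  Or.inl (Or.inl (Or.inl (Or.inl (Or.inr ⟨⟨(i, j), h⟩, rfl⟩))))

theorem mem_RelBC_lie_hC_hC (i j : Fin (n + 2)) : ⁅hC i, hC j⁆ ∈ RelBC n :=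
  Or.inl (Or.inl (Or.inl (Or.inr ⟨(i, j), rfl⟩)))

theorem mem_RelBC_lie_hC_xC (i j : Fin (n + 2)) : ⁅hC i, xC j⁆ - aC n i j • xC j ∈ RelBC n :=
  Or.inl (Or.inl (Or.inr ⟨(i, j), rfl⟩))

theorem mem_RelBC_serreC {i j : Fin (n + 2)} (h : i ≠ j) : serreC i j ∈ RelBC n :=
  Or.inl (Or.inr ⟨⟨(i, j), h⟩, rfl⟩)

theorem mem_RelB_lie_HB_HB (i j : Fin (n + 2)) : ⁅HB i, HB j⁆ ∈ RelB n :=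
  Or.inl (Or.inl ⟨(i, j), rfl⟩)

theorem mem_RelB_lie_HB_XB (i j : Fin (n + 2)) : ⁅HB i, XB j⁆ - aB n i j • XB j ∈ RelB n :=
  Or.inl (Or.inr ⟨(i, j), rfl⟩)

theorem mem_RelB_serreBB {i j : Fin (n + 2)} (h : i ≠ j) : serreBB i j ∈ RelB n :=
  Or.inr ⟨⟨(i, j), h⟩, rfl⟩

theorem mem_RelC_lie_HB_HB (i j : Fin (n + 2)) : ⁅HB i, HB j⁆ ∈ RelC n :=
  Or.inl (Or.inl ⟨(i, j), rfl⟩)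

theorem mem_RelC_lie_HB_XB (i j : Fin (n + 2)) : ⁅HB i, XB j⁆ - aC n i j • XB j ∈ RelC n :=
  Or.inl (Or.inr ⟨(i, j), rfl⟩)

theorem mem_RelC_serreCC {i j : Fin (n + 2)} (h : i ≠ j) : serreCC i j ∈ RelC n :=
  Or.inr ⟨⟨(i, j), h⟩, rfl⟩

theorem gBC_mk_eq_zero_of_mem {r : FL n} (hr : r ∈ RelBC n) :
    (LieSubmodule.Quotient.mk r : gBC n) = 0 :=
  LieIdeal.mk_eq_zero_of_mem hr

namespace borelB

noncomputable def x (i : Fin (n + 2)) : borelB n := LieSubmodule.Quotient.mk (XB i)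

noncomputable def h (i : Fin (n + 2)) : borelB n := LieSubmodule.Quotient.mk (HB i)

theorem lie_h_h (i j : Fin (n + 2)) : ⁅h i, h j⁆ = 0 :=
  LieIdeal.mk_eq_zero_of_mem (mem_RelB_lie_HB_HB i j)

theorem lie_h_x (i j : Fin (n + 2)) : ⁅h i, x j⁆ = aB n i j • x j :=
  sub_eq_zero.mp (LieIdeal.mk_eq_zero_of_mem (mem_RelB_lie_HB_XB i j))

end borelB

namespace borelC

noncomputable def x (i : Fin (n + 2)) : borelC n := LieSubmodule.Quotient.mk (XB i)

noncomputable def h (i : Fin (n + 2)) : borelC n := LieSubmodule.Quotient.mk (HB i)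

theorem lie_h_h (i j : Fin (n + 2)) : ⁅h i, h j⁆ = 0 :=
  LieIdeal.mk_eq_zero_of_mem (mem_RelC_lie_HB_HB i j)

theorem lie_h_x (i j : Fin (n + 2)) : ⁅h i, x j⁆ = aC n i j • x j :=
  sub_eq_zero.mp (LieIdeal.mk_eq_zero_of_mem (mem_RelC_lie_HB_XB i j))

end borelC

noncomputable def scaleC (n : ℕ) (i : Fin (n + 2)) : ℂ := if i.val = n + 1 then 2⁻¹ else 1

theorem scaleC_ne_zero (i : Fin (n + 2)) : scaleC n i ≠ 0 := by
  unfold scaleC; split_ifs <;> norm_num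

theorem hC_eq_smul (i : Fin (n + 2)) : hC i = scaleC n i • Hg i := by
  unfold hC scaleC; split_ifs <;> simp

theorem aC_eq_scaleC_mul_aB {i j : Fin (n + 2)} (hj : j.val ≠ n + 1) :
    aC n i j = scaleC n i * aB n i j := by
  unfold aC aB scaleC
  simp only [Fin.ext_iff]
  split_ifs <;> first | omega | norm_num

theorem serreC_eq_serreB {i j : Fin (n + 2)} (hi : i.val ≠ n + 1) (hj : j.val ≠ n + 1) :
    serreC i j = serreB i j := by
  have hxC : ∀ k : Fin (n + 2), k.val ≠ n + 1 → xC k = Xg k := fun k hk => if_neg hk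
  unfold serreC serreB
  rw [hxC i hi, hxC j hj]
  split_ifs <;> first | rfl | omega

noncomputable def toBorelB (n : ℕ) : FL n →ₗ⁅ℂ⁆ borelB n :=
  FreeLieAlgebra.lift ℂ (Sum.elim borelB.x (Sum.elim borelB.h 0))

@[simp] theorem toBorelB_Xg (i : Fin (n + 2)) : toBorelB n (Xg i) = borelB.x i := by
  simp [toBorelB, Xg]

@[simp] theorem toBorelB_Hg (i : Fin (n + 2)) : toBorelB n (Hg i) = borelB.h i := by
  simp [toBorelB, Hg]

@[simp] theorem toBorelB_Xg' : toBorelB n (Xg' n) = 0 := by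
  simp [toBorelB, Xg']

theorem toBorelB_xC (i : Fin (n + 2)) :
    toBorelB n (xC i) = if i.val = n + 1 then 0 else borelB.x i := by
  unfold xC; split_ifs <;> simp

theorem toBorelB_serreB (i j : Fin (n + 2)) :
    toBorelB n (serreB i j) = LieSubmodule.Quotient.mk (serreBB i j) := by
  unfold serreB serreBB; split_ifs <;> simp [LieSubmodule.Quotient.mk_bracket, borelB.x]

theorem toBorelB_serreC_eq_zero {i j : Fin (n + 2)} (hij : i.val = n + 1 ∨ j.val = n + 1) :
    toBorelB n (serreC i j) = 0 := by
  unfold serreC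
  rcases hij with h | h <;> split_ifs <;> simp [toBorelB_xC, h]

theorem toBorelB_eq_zero_of_mem_RelBC : ∀ r ∈ RelBC n, toBorelB n r = 0 := by
  rintro r ((((((⟨⟨i, j⟩, rfl⟩ | ⟨⟨i, j⟩, rfl⟩) | ⟨⟨⟨i, j⟩, hij⟩, rfl⟩) | ⟨⟨i, j⟩, rfl⟩) |
    ⟨⟨i, j⟩, rfl⟩) | ⟨⟨⟨i, j⟩, hij⟩, rfl⟩) | (rfl | rfl))
  · simp [borelB.lie_h_h]
  · simp [borelB.lie_h_x]
  · rw [toBorelB_serreB, LieIdeal.mk_eq_zero_of_mem (mem_RelB_serreBB hij)]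
  · simp [hC_eq_smul, borelB.lie_h_h]
  · by_cases hj : j.val = n + 1
    · simp [toBorelB_xC, hj]
    · simp only [hC_eq_smul, map_sub, map_smul, LieHom.map_lie, toBorelB_xC, if_neg hj,
        toBorelB_Hg, smul_lie, borelB.lie_h_x, aC_eq_scaleC_mul_aB hj, smul_smul, sub_self]
  · dsimp only
    by_cases hN : i.val = n + 1 ∨ j.val = n + 1
    · exact toBorelB_serreC_eq_zero hN
    · rw [not_or] at hN
      rw [serreC_eq_serreB hN.1 hN.2, toBorelB_serreB,
        LieIdeal.mk_eq_zero_of_mem (mem_RelB_serreBB hij)]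
  · simp
  · simp

noncomputable def toBorelC (n : ℕ) : FL n →ₗ⁅ℂ⁆ borelC n :=
  FreeLieAlgebra.lift ℂ (Sum.elim (fun i => if i.val = n + 1 then 0 else borelC.x i)
    (Sum.elim (fun i => (scaleC n i)⁻¹ • borelC.h i) fun _ => borelC.x (Fin.last (n + 1))))

@[simp] theorem toBorelC_Xg (i : Fin (n + 2)) :
    toBorelC n (Xg i) = if i.val = n + 1 then 0 else borelC.x i := by
  simp [toBorelC, Xg]

@[simp] theorem toBorelC_Hg (i : Fin (n + 2)) :
    toBorelC n (Hg i) = (scaleC n i)⁻¹ • borelC.h i := by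
  simp [toBorelC, Hg]

@[simp] theorem toBorelC_Xg' : toBorelC n (Xg' n) = borelC.x (Fin.last (n + 1)) := by
  simp [toBorelC, Xg']

@[simp] theorem toBorelC_xC (i : Fin (n + 2)) : toBorelC n (xC i) = borelC.x i := by
  unfold xC
  split_ifs with h
  · rw [toBorelC_Xg', Fin.ext (h.trans (Fin.val_last _).symm)]
  · simp [h]

@[simp] theorem toBorelC_hC (i : Fin (n + 2)) : toBorelC n (hC i) = borelC.h i := by
  simp [hC_eq_smul, smul_smul, scaleC_ne_zero]

theorem toBorelC_serreC (i j : Fin (n + 2)) :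
    toBorelC n (serreC i j) = LieSubmodule.Quotient.mk (serreCC i j) := by
  unfold serreC serreCC; split_ifs <;> simp [LieSubmodule.Quotient.mk_bracket, borelC.x]

theorem toBorelC_serreB_eq_zero {i j : Fin (n + 2)} (hij : i.val = n + 1 ∨ j.val = n + 1) :
    toBorelC n (serreB i j) = 0 := by
  unfold serreB
  rcases hij with h | h <;> split_ifs <;> simp [h]

theorem toBorelC_eq_zero_of_mem_RelBC : ∀ r ∈ RelBC n, toBorelC n r = 0 := by
  rintro r ((((((⟨⟨i, j⟩, rfl⟩ | ⟨⟨i, j⟩, rfl⟩) | ⟨⟨⟨i, j⟩, hij⟩, rfl⟩) | ⟨⟨i, j⟩, rfl⟩) |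
    ⟨⟨i, j⟩, rfl⟩) | ⟨⟨⟨i, j⟩, hij⟩, rfl⟩) | (rfl | rfl))
  · simp [borelC.lie_h_h]
  · by_cases hj : j.val = n + 1
    · simp [hj]
    · simp [hj, borelC.lie_h_x, aC_eq_scaleC_mul_aB hj, smul_smul, scaleC_ne_zero]
  · dsimp only
    by_cases hN : i.val = n + 1 ∨ j.val = n + 1
    · exact toBorelC_serreB_eq_zero hN
    · rw [not_or] at hN
      rw [← serreC_eq_serreB hN.1 hN.2, toBorelC_serreC,
        LieIdeal.mk_eq_zero_of_mem (mem_RelC_serreCC hij)]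
  · simp [borelC.lie_h_h]
  · simp [borelC.lie_h_x]
  · rw [toBorelC_serreC, LieIdeal.mk_eq_zero_of_mem (mem_RelC_serreCC hij)]
  · simp
  · simp

noncomputable def toFLB (n : ℕ) : FB n →ₗ⁅ℂ⁆ FL n :=
  FreeLieAlgebra.lift ℂ (Sum.elim Xg Hg)

@[simp] theorem toFLB_XB (i : Fin (n + 2)) : toFLB n (XB i) = Xg i := by simp [toFLB, XB]

@[simp] theorem toFLB_HB (i : Fin (n + 2)) : toFLB n (HB i) = Hg i := by simp [toFLB, HB]

theorem toFLB_mem_RelBC : ∀ r ∈ RelB n, toFLB n r ∈ RelBC n := by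
  rintro r ((⟨⟨i, j⟩, rfl⟩ | ⟨⟨i, j⟩, rfl⟩) | ⟨⟨⟨i, j⟩, hij⟩, rfl⟩)
  · simpa using mem_RelBC_lie_Hg_Hg i j
  · simpa using mem_RelBC_lie_Hg_Xg i j
  · have h : toFLB n (serreBB i j) = serreB i j := by
      unfold serreBB serreB; split_ifs <;> simp
    exact h ▸ mem_RelBC_serreB hij

noncomputable def toFLC (n : ℕ) : FB n →ₗ⁅ℂ⁆ FL n :=
  FreeLieAlgebra.lift ℂ (Sum.elim xC hC)

@[simp] theorem toFLC_XB (i : Fin (n + 2)) : toFLC n (XB i) = xC i := by simp [toFLC, XB]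

@[simp] theorem toFLC_HB (i : Fin (n + 2)) : toFLC n (HB i) = hC i := by simp [toFLC, HB]

theorem toFLC_mem_RelBC : ∀ r ∈ RelC n, toFLC n r ∈ RelBC n := by
  rintro r ((⟨⟨i, j⟩, rfl⟩ | ⟨⟨i, j⟩, rfl⟩) | ⟨⟨⟨i, j⟩, hij⟩, rfl⟩)
  · simpa using mem_RelBC_lie_hC_hC i j
  · simpa using mem_RelBC_lie_hC_xC i j
  · have h : toFLC n (serreCC i j) = serreC i j := by
      unfold serreCC serreC; split_ifs <;> simp
    exact h ▸ mem_RelBC_serreC hij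

section

open LieSubmodule

variable (n)

theorem IdBC_le_ker_toBorelB : IdBC n ≤ (toBorelB n).ker :=
  LieIdeal.lieSpan_le_ker_iff.mpr toBorelB_eq_zero_of_mem_RelBC

theorem IdBC_le_ker_toBorelC : IdBC n ≤ (toBorelC n).ker :=
  LieIdeal.lieSpan_le_ker_iff.mpr toBorelC_eq_zero_of_mem_RelBC

noncomputable def quotBToBorelB : gBC n ⧸ lieSpan ℂ (gBC n) {xg' n} →ₗ⁅ℂ⁆ borelB n :=
  LieIdeal.liftQ _ ((IdBC n).liftQ (toBorelB n) (IdBC_le_ker_toBorelB n))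
    (LieIdeal.lieSpan_le_ker_iff.mpr (by simp [xg']))

noncomputable def borelBToQuotB : borelB n →ₗ⁅ℂ⁆ gBC n ⧸ lieSpan ℂ (gBC n) {xg' n} :=
  LieIdeal.liftQ _ ((LieIdeal.mkQ _).comp ((IdBC n).mkQ.comp (toFLB n)))
    (LieIdeal.lieSpan_le_ker_iff.mpr fun r hr => by
      simp [gBC_mk_eq_zero_of_mem (toFLB_mem_RelBC r hr)])

theorem quotBToBorelB_comp_borelBToQuotB :
    (quotBToBorelB n).comp (borelBToQuotB n) = LieHom.id := by
  refine LieIdeal.quotient_hom_ext (FreeLieAlgebra.hom_ext ?_)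
  rintro (i | i) <;>
    simp [quotBToBorelB, borelBToQuotB, of_inl_eq_XB, of_inr_eq_HB, borelB.x, borelB.h]

theorem borelBToQuotB_comp_quotBToBorelB :
    (borelBToQuotB n).comp (quotBToBorelB n) = LieHom.id := by
  refine LieIdeal.quotient_hom_ext (LieIdeal.quotient_hom_ext (FreeLieAlgebra.hom_ext ?_))
  rintro (i | i | u)
  · simp [quotBToBorelB, borelBToQuotB, of_inl_eq_Xg, borelB.x]
  · simp [quotBToBorelB, borelBToQuotB, of_inr_inl_eq_Hg, borelB.h]
  · cases u
    simp only [LieHom.comp_apply, LieIdeal.mkQ_apply, of_inr_inr_eq_Xg', quotBToBorelB,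
      LieIdeal.liftQ_mk, toBorelB_Xg', map_zero, LieHom.id_apply]
    exact (LieIdeal.mk_eq_zero_of_mem (Set.mem_singleton (xg' n))).symm

noncomputable def quotCToBorelC :
    gBC n ⧸ lieSpan ℂ (gBC n) {xg (Fin.last (n + 1))} →ₗ⁅ℂ⁆ borelC n :=
  LieIdeal.liftQ _ ((IdBC n).liftQ (toBorelC n) (IdBC_le_ker_toBorelC n))
    (LieIdeal.lieSpan_le_ker_iff.mpr (by simp [xg]))

noncomputable def borelCToQuotC :
    borelC n →ₗ⁅ℂ⁆ gBC n ⧸ lieSpan ℂ (gBC n) {xg (Fin.last (n + 1))} :=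
  LieIdeal.liftQ _ ((LieIdeal.mkQ _).comp ((IdBC n).mkQ.comp (toFLC n)))
    (LieIdeal.lieSpan_le_ker_iff.mpr fun r hr => by
      simp [gBC_mk_eq_zero_of_mem (toFLC_mem_RelBC r hr)])

theorem quotCToBorelC_comp_borelCToQuotC :
    (quotCToBorelC n).comp (borelCToQuotC n) = LieHom.id := by
  refine LieIdeal.quotient_hom_ext (FreeLieAlgebra.hom_ext ?_)
  rintro (i | i) <;>
    simp [quotCToBorelC, borelCToQuotC, of_inl_eq_XB, of_inr_eq_HB, borelC.x, borelC.h]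

theorem borelCToQuotC_comp_quotCToBorelC :
    (borelCToQuotC n).comp (quotCToBorelC n) = LieHom.id := by
  refine LieIdeal.quotient_hom_ext (LieIdeal.quotient_hom_ext (FreeLieAlgebra.hom_ext ?_))
  rintro (i | i | u)
  · by_cases hi : i.val = n + 1
    · obtain rfl : i = Fin.last (n + 1) := Fin.ext hi
      simp only [LieHom.comp_apply, LieIdeal.mkQ_apply, of_inl_eq_Xg, quotCToBorelC,
        LieIdeal.liftQ_mk, toBorelC_Xg, if_pos hi, map_zero, LieHom.id_apply]
      exact (LieIdeal.mk_eq_zero_of_mem (Set.mem_singleton (xg (Fin.last (n + 1))))).symm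
    · simp [quotCToBorelC, borelCToQuotC, of_inl_eq_Xg, hi, borelC.x, xC]
  · simp [quotCToBorelC, borelCToQuotC, of_inr_inl_eq_Hg, borelC.h, hC_eq_smul, smul_smul,
      scaleC_ne_zero]
  · cases u
    simp [quotCToBorelC, borelCToQuotC, of_inr_inr_eq_Xg', borelC.x, xC]

noncomputable def quotBEquivBorelB : (gBC n ⧸ lieSpan ℂ (gBC n) {xg' n}) ≃ₗ⁅ℂ⁆ borelB n :=
  .ofLieHoms (quotBToBorelB n) (borelBToQuotB n) (borelBToQuotB_comp_quotBToBorelB n)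
    (quotBToBorelB_comp_borelBToQuotB n)

noncomputable def quotCEquivBorelC :
    (gBC n ⧸ lieSpan ℂ (gBC n) {xg (Fin.last (n + 1))}) ≃ₗ⁅ℂ⁆ borelC n :=
  .ofLieHoms (quotCToBorelC n) (borelCToQuotC n) (borelCToQuotC_comp_quotCToBorelC n)
    (quotCToBorelC_comp_borelCToQuotC n)

end

/-- the quotient of 𝔤 by the Lie ideal generated by x'_N is
isomorphic to the Borel subalgebra of type B_N, and the quotient by the Lie
ideal generated by x_N is isomorphic to the Borel subalgebra of type C_N. -/
theorem stmt_11 (n : ℕ) :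
    Nonempty
      ((gBC n ⧸ LieSubmodule.lieSpan ℂ (gBC n) {xg' n}) ≃ₗ⁅ℂ⁆ borelB n) ∧
    Nonempty
      ((gBC n ⧸ LieSubmodule.lieSpan ℂ (gBC n)
          {xg (⟨n + 1, by omega⟩ : Fin (n + 2))}) ≃ₗ⁅ℂ⁆ borelC n) :=
  ⟨⟨quotBEquivBorelB n⟩, ⟨quotCEquivBorelC n⟩⟩
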